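/- arXiv:2312.12800 — 2 statements merged into one kernel-verified Lean document; each statement's English description precedes it below -/
import Mathlib

section
/- Let ρ be a density matrix on ℂ^d and let {K_j}_{j=1}^n be Kraus operators of a quantum channel Φ on ℂ^d. If {K′_i}_{i=1}^n is another family of Kraus operators of the same channel given by K′_i = Σ_j U_{ij} K_j for an n×n unitary matrix (U_{ij}), then Σ_i V_ρ(K′_i) = Σ_j V_ρ(K_j); that is, the channel variance V_ρ(Φ) is independent of the choice of Kraus decomposition. -/
/-!
Each ingredient of the variance is a quadratic expression `∑ i, B (K i) (K i)` for a sesquilinear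
`B`: the matrices `∑ i, K iᴴ * K i` and `∑ i, K i * K iᴴ`, and `∑ i, |tr (K i * ρ)|²`. Substituting
`K' i = ∑ j, U i j • K j` turns such a sum into `∑ j k, (Uᴴ * U) j k • B (K j) (K k)`, which
collapses to the original one because `Uᴴ * U = 1`.
-/

open Matrix
open scoped ComplexOrder

noncomputable section

/-- Variance of an operator `K` with respect to a state `ρ`:
`V_ρ(K) = ½ tr((K†K + KK†)ρ) − |tr(Kρ)|²`. -/
def opVar {d : ℕ} (ρ K : Matrix (Fin d) (Fin d) ℂ) : ℝ :=
  (((Kᴴ * K + K * Kᴴ) * ρ).trace).re / 2 - ‖(K * ρ).trace‖ ^ 2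

/-- The positive semidefinite square root of a positive semidefinite matrix
(Mathlib's former `Matrix.PosSemidef.sqrt`, removed since; same definition). -/
def Matrix.PosSemidef.sqrt {n : Type*} [Fintype n] [DecidableEq n] {𝕜 : Type*} [RCLike 𝕜]
    {A : Matrix n n 𝕜} (hA : A.PosSemidef) : Matrix n n 𝕜 :=
  hA.1.eigenvectorUnitary.1 * diagonal ((↑) ∘ (√·) ∘ hA.1.eigenvalues) *
  (star hA.1.eigenvectorUnitary : Matrix n n 𝕜)

/-- Variance of a channel with Kraus operators `K i`: `V_ρ(Φ) = Σ_i V_ρ(K_i)`. -/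
def chanVar {d n : ℕ} (ρ : Matrix (Fin d) (Fin d) ℂ)
    (K : Fin n → Matrix (Fin d) (Fin d) ℂ) : ℝ :=
  ∑ i, opVar ρ (K i)

/-- Wigner–Yanase skew information of a channel with Kraus operators `K i`:
`I_ρ(Φ) = ½ Σ_i ‖[√ρ, K_i]‖_F²`, where `√ρ` is the PSD square root of `ρ`. -/
def chanSkew {d n : ℕ} (ρ : Matrix (Fin d) (Fin d) ℂ) (hρ : ρ.PosSemidef)
    (K : Fin n → Matrix (Fin d) (Fin d) ℂ) : ℝ :=
  (1 / 2) * ∑ i,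
    (((hρ.sqrt * K i - K i * hρ.sqrt)ᴴ * (hρ.sqrt * K i - K i * hρ.sqrt)).trace).re

/-- Quantum uncertainty of a channel:
`Q_ρ(Φ) = √(V_ρ(Φ)² − (V_ρ(Φ) − I_ρ(Φ))²)`. -/
def chanQ {d n : ℕ} (ρ : Matrix (Fin d) (Fin d) ℂ) (hρ : ρ.PosSemidef)
    (K : Fin n → Matrix (Fin d) (Fin d) ℂ) : ℝ :=
  Real.sqrt ((chanVar ρ K) ^ 2 - (chanVar ρ K - chanSkew ρ hρ K) ^ 2)

section UnitaryMixing

variable {R M N ι : Type*} [CommSemiring R] [StarRing R] [Fintype ι] [DecidableEq ι]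

theorem sum_sesq_unitary_mix [AddCommMonoid M] [Module R M] [AddCommMonoid N] [Module R N]
    (U : Matrix ι ι R) (hU : Uᴴ * U = 1) (B : M →ₗ⋆[R] M →ₗ[R] N) (x : ι → M) :
    ∑ i, B (∑ j, U i j • x j) (∑ k, U i k • x k) = ∑ j, B (x j) (x j) := by
  have hgram : ∀ j k, ∑ i, star (U i j) * U i k = (1 : Matrix ι ι R) j k := by
    intro j k
    rw [← hU, Matrix.mul_apply]
    rfl
  have hexpand : ∀ i, B (∑ j, U i j • x j) (∑ k, U i k • x k)
      = ∑ j, ∑ k, (star (U i j) * U i k) • B (x j) (x k) := by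
    intro i
    rw [map_sum B, LinearMap.sum_apply]
    simp only [map_smulₛₗ, LinearMap.smul_apply, map_sum, smul_smul, RingHom.id_apply,
      starRingEnd_apply, mul_comm]
  calc ∑ i, B (∑ j, U i j • x j) (∑ k, U i k • x k)
      = ∑ j, ∑ k, (∑ i, star (U i j) * U i k) • B (x j) (x k) := by
        simp only [hexpand, Finset.sum_smul]
        rw [Finset.sum_comm]
        exact Finset.sum_congr rfl fun j _ => Finset.sum_comm
    _ = ∑ j, B (x j) (x j) := by
        simp [hgram, Matrix.one_apply, ite_smul]

theorem sum_norm_sq_unitary_mix {𝕜 E : Type*} [RCLike 𝕜] [SeminormedAddCommGroup E]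
    [InnerProductSpace 𝕜 E] (U : Matrix ι ι 𝕜) (hU : Uᴴ * U = 1) (x : ι → E) :
    ∑ i, ‖∑ j, U i j • x j‖ ^ 2 = ∑ j, ‖x j‖ ^ 2 := by
  simp only [← inner_self_eq_norm_sq (𝕜 := 𝕜), ← map_sum]
  exact congrArg RCLike.re (sum_sesq_unitary_mix U hU (innerₛₗ 𝕜) x)

variable [Ring M] [StarRing M] [Algebra R M] [StarModule R M]

theorem sum_star_mul_self_unitary_mix (U : Matrix ι ι R) (hU : Uᴴ * U = 1) (x : ι → M) :
    ∑ i, star (∑ j, U i j • x j) * ∑ k, U i k • x k = ∑ j, star (x j) * x j :=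
  sum_sesq_unitary_mix U hU ((LinearMap.mul R M).comp (starLinearEquiv R).toLinearMap) x

theorem sum_mul_star_self_unitary_mix (U : Matrix ι ι R) (hU : Uᴴ * U = 1) (x : ι → M) :
    ∑ i, (∑ k, U i k • x k) * star (∑ j, U i j • x j) = ∑ j, x j * star (x j) :=
  sum_sesq_unitary_mix U hU ((LinearMap.mul R M).flip.comp (starLinearEquiv R).toLinearMap) x

end UnitaryMixing

theorem stmt_5_general {d n : ℕ}
    (ρ : Matrix (Fin d) (Fin d) ℂ)
    (K K' : Fin n → Matrix (Fin d) (Fin d) ℂ)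
    (U : Matrix (Fin n) (Fin n) ℂ) (hU : Uᴴ * U = 1)
    (hK' : ∀ i, K' i = ∑ j, U i j • K j) :
    ∑ i, opVar ρ (K' i) = ∑ j, opVar ρ (K j) := by
  have hsecond : ∑ i, ((K' i)ᴴ * K' i + K' i * (K' i)ᴴ) = ∑ j, ((K j)ᴴ * K j + K j * (K j)ᴴ) := by
    simp only [Finset.sum_add_distrib, hK', ← star_eq_conjTranspose,
      sum_star_mul_self_unitary_mix U hU, sum_mul_star_self_unitary_mix U hU]
  have htrace : ∀ i, (K' i * ρ).trace = ∑ j, U i j • (K j * ρ).trace := by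
    simp [hK', Finset.sum_mul, trace_sum, trace_smul]
  have hmean : ∑ i, ‖(K' i * ρ).trace‖ ^ 2 = ∑ j, ‖(K j * ρ).trace‖ ^ 2 := by
    simp only [htrace]
    exact sum_norm_sq_unitary_mix U hU _
  simp only [opVar, Finset.sum_sub_distrib, ← Finset.sum_div, ← Complex.re_sum, ← trace_sum,
    ← Finset.sum_mul, hsecond, hmean]

/-- The channel variance is independent of the choice of Kraus decomposition:
if `K′_i = Σ_j U_{ij} K_j` for a unitary matrix `U`, then `Σ_i V_ρ(K′_i) = Σ_j V_ρ(K_j)`. -/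
theorem stmt_5 {d n : ℕ}
    (ρ : Matrix (Fin d) (Fin d) ℂ) (hρ : ρ.PosSemidef) (htr : ρ.trace = 1)
    (K K' : Fin n → Matrix (Fin d) (Fin d) ℂ)
    (hK : ∑ j, (K j)ᴴ * K j = 1)
    (U : Matrix (Fin n) (Fin n) ℂ) (hU : Uᴴ * U = 1)
    (hK' : ∀ i, K' i = ∑ j, U i j • K j) :
    ∑ i, opVar ρ (K' i) = ∑ j, opVar ρ (K j) :=
  stmt_5_general ρ K K' U hU hK'
end
end

section
/- Let ρ = ½(I + r_x σ_x + r_y σ_y + r_z σ_z) be a qubit density matrix with Bloch vector (r_x, r_y, r_z), r_x² + r_y² + r_z² ≤ 1, and regard each Pauli matrix σ_x, σ_y, σ_z as a unitary channel with the single Kraus operator σ_x, σ_y, σ_z respectively. If |r_x| = |r_y| = |r_z| = 1/√3, or (|r_x| − 1)(|r_y| − 1)(|r_z| − 1) = 0, then Q_ρ(σ_x)·Q_ρ(σ_y)·Q_ρ(σ_z) = (τ/8) · |tr(σ_x ρ) · tr(σ_y ρ) · tr(σ_z ρ)| with τ = 64/(3√3). -/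
open Matrix
open scoped ComplexOrder

noncomputable section

/-- Pauli matrix σ_x. -/
def pauliX : Matrix (Fin 2) (Fin 2) ℂ := !![0, 1; 1, 0]

/-- Pauli matrix σ_y. -/
def pauliY : Matrix (Fin 2) (Fin 2) ℂ := !![0, -Complex.I; Complex.I, 0]

/-- Pauli matrix σ_z. -/
def pauliZ : Matrix (Fin 2) (Fin 2) ℂ := !![1, 0; 0, -1]

/-! Under either condition the Bloch vector is a unit vector (in the second case a point on a
coordinate axis), so `ρ` is a projection and `√ρ = ρ`. For a projection `ρ` and a unitary Kraus
operator `K` the skew information `½‖[ρ, K]‖²` coincides with the variance `1 - |tr(Kρ)|²`, so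
`Q_ρ(σ_k) = 1 - r_k²`. The identity then reads `(2/3)³ = (8 / (3√3)) · (1/√3)³` in the first case
and `0 = 0` in the second. -/

theorem Matrix.PosSemidef.sqrt_eq_cfc {n : Type*} [Fintype n] [DecidableEq n] {𝕜 : Type*}
    [RCLike 𝕜] {A : Matrix n n 𝕜} (hA : A.PosSemidef) : hA.sqrt = cfc Real.sqrt A := by
  rw [hA.1.cfc_eq]
  simp [Matrix.PosSemidef.sqrt, IsHermitian.cfc, Unitary.conjStarAlgAut_apply]

theorem Matrix.PosSemidef.sqrt_eq_self {n : Type*} [Fintype n] [DecidableEq n] {𝕜 : Type*}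
    [RCLike 𝕜] {A : Matrix n n 𝕜} (hA : A.PosSemidef) (h : IsIdempotentElem A) :
    hA.sqrt = A := by
  rw [hA.sqrt_eq_cfc]
  conv_rhs => rw [← cfc_id' ℝ A hA.1]
  refine cfc_congr fun x hx => ?_
  rcases h.spectrum_subset ℝ hx with rfl | rfl <;> simp

theorem Matrix.re_trace_conjTranspose_mul_self {m n : Type*} [Fintype m] [Fintype n]
    (M : Matrix m n ℂ) : (Mᴴ * M).trace.re = ∑ i, ∑ j, Complex.normSq (M i j) := by
  simp [trace, Matrix.mul_apply, Complex.re_sum, Complex.normSq_apply, Finset.sum_comm (γ := m)]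

theorem opVar_of_mem_unitary {d : ℕ} (ρ : Matrix (Fin d) (Fin d) ℂ)
    {K : Matrix (Fin d) (Fin d) ℂ} (hK : K ∈ unitary _) :
    opVar ρ K = ρ.trace.re - ‖(K * ρ).trace‖ ^ 2 := by
  rw [opVar, ← star_eq_conjTranspose, Unitary.star_mul_self_of_mem hK,
    Unitary.mul_star_self_of_mem hK]
  simp [add_mul, trace_add]

theorem chanQ_eq_chanVar_of_chanSkew_eq {d n : ℕ} {ρ : Matrix (Fin d) (Fin d) ℂ}
    (hρ : ρ.PosSemidef) {K : Fin n → Matrix (Fin d) (Fin d) ℂ}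
    (h : chanSkew ρ hρ K = chanVar ρ K) (hV : 0 ≤ chanVar ρ K) : chanQ ρ hρ K = chanVar ρ K := by
  rw [chanQ, h, sub_self, sq (0 : ℝ), mul_zero, sub_zero, Real.sqrt_sq hV]

theorem chanQ_unitary_of_isIdempotentElem {d : ℕ} {ρ : Matrix (Fin d) (Fin d) ℂ}
    (hρ : ρ.PosSemidef) (hproj : IsIdempotentElem ρ) (htr : ρ.trace = 1)
    {K : Matrix (Fin d) (Fin d) ℂ} (hK : K ∈ unitary _) {t : ℝ} (hKρ : (K * ρ).trace = t)
    (ht : t ^ 2 ≤ 1) (hcomm : ((ρ * K - K * ρ)ᴴ * (ρ * K - K * ρ)).trace.re = 2 * (1 - t ^ 2)) :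
    chanQ ρ hρ ![K] = 1 - t ^ 2 := by
  have hV : chanVar ρ ![K] = 1 - t ^ 2 := by
    simp [chanVar, opVar_of_mem_unitary ρ hK, htr, hKρ, Complex.norm_real]
  rw [chanQ_eq_chanVar_of_chanSkew_eq, hV]
  · rw [chanSkew, hρ.sqrt_eq_self hproj, Fin.sum_univ_one, Matrix.cons_val_zero, hcomm, hV]
    ring
  · linarith

def blochState (rx ry rz : ℝ) : Matrix (Fin 2) (Fin 2) ℂ :=
  (1 / 2 : ℂ) • (1 + (rx : ℂ) • pauliX + (ry : ℂ) • pauliY + (rz : ℂ) • pauliZ)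

section BlochState

variable (rx ry rz : ℝ)

theorem blochState_eq : blochState rx ry rz =
    !![((1 + rz) / 2 : ℂ), (rx - ry * Complex.I) / 2; (rx + ry * Complex.I) / 2, (1 - rz) / 2] := by
  ext i j; fin_cases i <;> fin_cases j <;> simp [blochState, pauliX, pauliY, pauliZ] <;> ring

theorem blochState_mul_self : blochState rx ry rz * blochState rx ry rz =
    blochState rx ry rz - ((1 - (rx ^ 2 + ry ^ 2 + rz ^ 2)) / 4 : ℝ) • 1 := by
  rw [blochState_eq]
  ext i j
  fin_cases i <;> fin_cases j <;> simp [Matrix.mul_apply, Fin.sum_univ_two] <;> ring_nf <;>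
    simp [Complex.I_sq] <;> ring

theorem trace_blochState : (blochState rx ry rz).trace = 1 := by
  simp [blochState_eq, trace_fin_two]; ring

theorem trace_pauliX_mul_blochState : (pauliX * blochState rx ry rz).trace = rx := by
  simp [blochState_eq, trace_fin_two, pauliX]; ring

theorem trace_pauliY_mul_blochState : (pauliY * blochState rx ry rz).trace = ry := by
  simp [blochState_eq, trace_fin_two, pauliY]; ring_nf; simp [Complex.I_sq]

theorem trace_pauliZ_mul_blochState : (pauliZ * blochState rx ry rz).trace = rz := by
  simp [blochState_eq, trace_fin_two, pauliZ]; ring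

theorem re_trace_commutator_sq_blochState_pauliX :
    let C := blochState rx ry rz * pauliX - pauliX * blochState rx ry rz
    (Cᴴ * C).trace.re = 2 * (ry ^ 2 + rz ^ 2) := by
  simp [re_trace_conjTranspose_mul_self, Fin.sum_univ_two, blochState_eq, pauliX,
    Complex.normSq_apply]
  ring

theorem re_trace_commutator_sq_blochState_pauliY :
    let C := blochState rx ry rz * pauliY - pauliY * blochState rx ry rz
    (Cᴴ * C).trace.re = 2 * (rx ^ 2 + rz ^ 2) := by
  simp [re_trace_conjTranspose_mul_self, Fin.sum_univ_two, blochState_eq, pauliY,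
    Complex.normSq_apply]
  ring

theorem re_trace_commutator_sq_blochState_pauliZ :
    let C := blochState rx ry rz * pauliZ - pauliZ * blochState rx ry rz
    (Cᴴ * C).trace.re = 2 * (rx ^ 2 + ry ^ 2) := by
  simp [re_trace_conjTranspose_mul_self, Fin.sum_univ_two, blochState_eq, pauliZ,
    Complex.normSq_apply]
  ring

end BlochState

theorem isIdempotentElem_blochState {rx ry rz : ℝ} (h : rx ^ 2 + ry ^ 2 + rz ^ 2 = 1) :
    IsIdempotentElem (blochState rx ry rz) := by
  rw [IsIdempotentElem, blochState_mul_self, h]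
  simp

theorem pauliX_mem_unitary : pauliX ∈ unitary (Matrix (Fin 2) (Fin 2) ℂ) := by
  rw [Matrix.mem_unitaryGroup_iff]
  ext i j; fin_cases i <;> fin_cases j <;> simp [pauliX, Matrix.mul_apply, Fin.sum_univ_two]

theorem pauliY_mem_unitary : pauliY ∈ unitary (Matrix (Fin 2) (Fin 2) ℂ) := by
  rw [Matrix.mem_unitaryGroup_iff]
  ext i j; fin_cases i <;> fin_cases j <;> simp [pauliY, Matrix.mul_apply, Fin.sum_univ_two]

theorem pauliZ_mem_unitary : pauliZ ∈ unitary (Matrix (Fin 2) (Fin 2) ℂ) := by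
  rw [Matrix.mem_unitaryGroup_iff]
  ext i j; fin_cases i <;> fin_cases j <;> simp [pauliZ, Matrix.mul_apply, Fin.sum_univ_two]

theorem sq_eq_of_abs_eq_inv_sqrt_three {x : ℝ} (h : |x| = 1 / √3) : x ^ 2 = 1 / 3 := by
  rw [← sq_abs, h, div_pow, one_pow, Real.sq_sqrt (by norm_num)]

theorem coordinate_axis_of_abs_sub_one_mul_eq_zero {x y z : ℝ} (hr : x ^ 2 + y ^ 2 + z ^ 2 ≤ 1)
    (h : (|x| - 1) * (|y| - 1) * (|z| - 1) = 0) :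
    (x ^ 2 = 1 ∧ y = 0 ∧ z = 0) ∨ (x = 0 ∧ y ^ 2 = 1 ∧ z = 0) ∨ (x = 0 ∧ y = 0 ∧ z ^ 2 = 1) := by
  have h1 : |x| = 1 ∨ |y| = 1 ∨ |z| = 1 := by simpa [sub_eq_zero, or_assoc] using h
  rcases h1 with h | h | h
  · have hx : x ^ 2 = 1 := by rw [← sq_abs, h, one_pow]
    refine Or.inl ⟨hx, ?_, ?_⟩ <;> nlinarith [sq_nonneg y, sq_nonneg z]
  · have hy : y ^ 2 = 1 := by rw [← sq_abs, h, one_pow]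
    refine Or.inr (Or.inl ⟨?_, hy, ?_⟩) <;> nlinarith [sq_nonneg x, sq_nonneg z]
  · have hz : z ^ 2 = 1 := by rw [← sq_abs, h, one_pow]
    refine Or.inr (Or.inr ⟨?_, ?_, hz⟩) <;> nlinarith [sq_nonneg x, sq_nonneg y]

section EqualityCondition

variable {x y z : ℝ} (hr : x ^ 2 + y ^ 2 + z ^ 2 ≤ 1)
  (hcond : (|x| = 1 / √3 ∧ |y| = 1 / √3 ∧ |z| = 1 / √3) ∨ (|x| - 1) * (|y| - 1) * (|z| - 1) = 0)
include hr hcond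

theorem sq_add_sq_add_sq_eq_one_of_equality_condition : x ^ 2 + y ^ 2 + z ^ 2 = 1 := by
  rcases hcond with ⟨hx, hy, hz⟩ | h
  · rw [sq_eq_of_abs_eq_inv_sqrt_three hx, sq_eq_of_abs_eq_inv_sqrt_three hy,
      sq_eq_of_abs_eq_inv_sqrt_three hz]
    norm_num
  · rcases coordinate_axis_of_abs_sub_one_mul_eq_zero hr h with
        ⟨h1, rfl, rfl⟩ | ⟨rfl, h1, rfl⟩ | ⟨rfl, rfl, h1⟩ <;> simp [h1]

theorem one_sub_sq_mul_one_sub_sq_mul_one_sub_sq_of_equality_condition :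
    (1 - x ^ 2) * (1 - y ^ 2) * (1 - z ^ 2) = 64 / (3 * √3) / 8 * (|x| * |y| * |z|) := by
  rcases hcond with ⟨hx, hy, hz⟩ | h
  · rw [sq_eq_of_abs_eq_inv_sqrt_three hx, sq_eq_of_abs_eq_inv_sqrt_three hy,
      sq_eq_of_abs_eq_inv_sqrt_three hz, hx, hy, hz]
    have h3 : √3 ^ 2 = 3 := Real.sq_sqrt (by norm_num)
    field_simp
    rw [show √3 ^ 4 = (√3 ^ 2) ^ 2 by ring, h3]
    norm_num
  · rcases coordinate_axis_of_abs_sub_one_mul_eq_zero hr h with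
        ⟨h1, rfl, rfl⟩ | ⟨rfl, h1, rfl⟩ | ⟨rfl, rfl, h1⟩ <;> simp [h1]

end EqualityCondition

/-- Equality condition for the tight triple-product Pauli uncertainty relation. -/
theorem stmt_14 (rx ry rz : ℝ) (hr : rx ^ 2 + ry ^ 2 + rz ^ 2 ≤ 1)
    (ρ : Matrix (Fin 2) (Fin 2) ℂ)
    (hρdef : ρ = (1 / 2 : ℂ) •
      (1 + (rx : ℂ) • pauliX + (ry : ℂ) • pauliY + (rz : ℂ) • pauliZ))
    (hρ : ρ.PosSemidef)
    (hcond : (|rx| = 1 / Real.sqrt 3 ∧ |ry| = 1 / Real.sqrt 3 ∧ |rz| = 1 / Real.sqrt 3) ∨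
      (|rx| - 1) * (|ry| - 1) * (|rz| - 1) = 0) :
    chanQ ρ hρ ![pauliX] * chanQ ρ hρ ![pauliY] * chanQ ρ hρ ![pauliZ] =
      (64 / (3 * Real.sqrt 3)) / 8 *
        ‖(pauliX * ρ).trace * (pauliY * ρ).trace * (pauliZ * ρ).trace‖ := by
  obtain rfl : ρ = blochState rx ry rz := hρdef
  have hpure := sq_add_sq_add_sq_eq_one_of_equality_condition hr hcond
  have hproj := isIdempotentElem_blochState hpure
  have htr := trace_blochState rx ry rz
  rw [chanQ_unitary_of_isIdempotentElem hρ hproj htr pauliX_mem_unitary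
      (trace_pauliX_mul_blochState rx ry rz) (by linarith [sq_nonneg ry, sq_nonneg rz])
      (by rw [re_trace_commutator_sq_blochState_pauliX]; linarith),
    chanQ_unitary_of_isIdempotentElem hρ hproj htr pauliY_mem_unitary
      (trace_pauliY_mul_blochState rx ry rz) (by linarith [sq_nonneg rx, sq_nonneg rz])
      (by rw [re_trace_commutator_sq_blochState_pauliY]; linarith),
    chanQ_unitary_of_isIdempotentElem hρ hproj htr pauliZ_mem_unitary
      (trace_pauliZ_mul_blochState rx ry rz) (by linarith [sq_nonneg rx, sq_nonneg ry])
      (by rw [re_trace_commutator_sq_blochState_pauliZ]; linarith),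
    trace_pauliX_mul_blochState, trace_pauliY_mul_blochState, trace_pauliZ_mul_blochState]
  simp only [← Complex.ofReal_mul, Complex.norm_real, Real.norm_eq_abs, abs_mul]
  exact one_sub_sq_mul_one_sub_sq_mul_one_sub_sq_of_equality_condition hr hcond
end
end
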